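/- Let 𝔗 be a set of total well-orderings on N that is closed in TO(N), assume A is multiplicative on 𝔗, and let L be a left ideal of A. Then every leading monomial ideal of L from 𝔗 is minimal among them with respect to inclusion, and the set {LM_≺(L) : ≺ ∈ 𝔗} is finite; that is, L admits at most finitely many distinct leading monomial ideals from 𝔗. -/

import Mathlib

/-- A binary relation is a total ordering: antisymmetric, transitive, and total. -/
def IsTotalOrdering {S : Type*} (r : S → S → Prop) : Prop :=
  (∀ a b, r a b → r b a → a = b) ∧ (∀ a b c, r a b → r b c → r a c) ∧ (∀ a b, r a b ∨ r b a)

/-- The set `TO(S)` of all total orderings on `S`. -/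
def TO (S : Type*) : Type _ := {r : S → S → Prop // IsTotalOrdering r}

/-- The topology `𝒰(S)` on `TO(S)`, generated by the subbasis of all sets
`U_{(a,b)} = {≤ ∈ TO(S) : a ≤ b}`. -/
instance TOTopology (S : Type*) : TopologicalSpace (TO S) :=
  TopologicalSpace.generateFrom {U | ∃ a b : S, U = {r : TO S | r.1 a b}}
/-- Monomials of `K[X_1,…,X_t]`, identified with their exponent vectors `ν ∈ ℕ^t`. -/
abbrev Mon (t : ℕ) := Fin t →₀ ℕ

/-- `LM` is a leading-monomial function: for each total ordering `r` on monomials and each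
nonzero polynomial `p`, `LM r p` is the `r`-maximal element of the support of `p`. -/
def IsLM (K : Type*) [Field K] (t : ℕ)
    (LM : TO (Mon t) → MvPolynomial (Fin t) K → Mon t) : Prop :=
  ∀ (r : TO (Mon t)) (p : MvPolynomial (Fin t) K), p ≠ 0 →
    LM r p ∈ p.support ∧ ∀ m ∈ p.support, r.1 m (LM r p)

/-- The leading monomial ideal `LM_≤(E)` of a subset `E ⊆ K[X]`: the ideal generated by the
leading monomials of the nonzero elements of `E`. -/
noncomputable def LMideal (K : Type*) [Field K] (t : ℕ)
    (LM : TO (Mon t) → MvPolynomial (Fin t) K → Mon t)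
    (r : TO (Mon t)) (E : Set (MvPolynomial (Fin t) K)) : Ideal (MvPolynomial (Fin t) K) :=
  Ideal.span {q | ∃ e ∈ E, e ≠ 0 ∧ q = MvPolynomial.monomial (LM r e) (1 : K)}

/- `A` is an associative (not necessarily commutative) `K`-algebra and
`Φ : A ≃ₗ[K] K[X_1,…,X_t]` a `K`-module isomorphism, so `N = Φ⁻¹(M)` is a `K`-basis of `A`.
A total ordering `≺` on `N` is identified, via the bijection induced by `Φ`, with a total
ordering on the monomials of `K[X]`, i.e. on exponent vectors `Mon t`. -/

/-- The leading monomial ideal `LM_≺(H)` of a subset `H ⊆ A`: the ideal of `K[X]` generated by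
the leading monomials (the `≺`-maximal monomials of the support of `Φ(h)`) of the nonzero
elements `h ∈ H`. -/
noncomputable def LMAideal (K A : Type*) [Field K] [Ring A] [Algebra K A] (t : ℕ)
    (Φ : A ≃ₗ[K] MvPolynomial (Fin t) K)
    (LM : TO (Mon t) → MvPolynomial (Fin t) K → Mon t)
    (r : TO (Mon t)) (H : Set A) : Ideal (MvPolynomial (Fin t) K) :=
  Ideal.span {q | ∃ h ∈ H, h ≠ 0 ∧ q = MvPolynomial.monomial (LM r (Φ h)) (1 : K)}

/-- `A` is multiplicative on a set `𝔗` of total orderings: `A` is a domain and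
`LM_≺(a·b) = LM_≺(a)·LM_≺(b)` (i.e. addition of exponent vectors) for all nonzero
`a, b ∈ A` and all `≺ ∈ 𝔗`. -/
def MultOn (K A : Type*) [Field K] [Ring A] [Algebra K A] (t : ℕ)
    (Φ : A ≃ₗ[K] MvPolynomial (Fin t) K)
    (LM : TO (Mon t) → MvPolynomial (Fin t) K → Mon t)
    (T : Set (TO (Mon t))) : Prop :=
  (∀ a b : A, a ≠ 0 → b ≠ 0 → a * b ≠ 0) ∧
  (∀ r ∈ T, ∀ a b : A, a ≠ 0 → b ≠ 0 → LM r (Φ (a * b)) = LM r (Φ a) + LM r (Φ b))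

/-- A total ordering is a (total) well-ordering: every nonempty subset has a minimum. -/
def IsWO {S : Type*} (r : TO S) : Prop :=
  ∀ T : Set S, T.Nonempty → ∃ a ∈ T, ∀ b ∈ T, r.1 a b

/-!
For `r ∈ T` the leading monomials of the nonzero elements of `L` form an upper set of `ℕ^t`,
because `L` is a left ideal and `A` is multiplicative. Hence `LM_{r'}(L) ≤ LM_r(L)` means that
every `r'`-leading monomial of `L` is an `r`-leading one. Conversely, if `m` is an `r`-leading
monomial, reduce `X^m` modulo `L` by the division algorithm for the well-ordering `r`: this gives
`l ∈ L` with no `r`-leading monomial in the support of `X^m - l`; then `l ≠ 0` and its `r'`-leading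
monomial, being also `r`-leading, can only be `m`. So comparable leading monomial ideals coincide.

By the Hilbert basis theorem `LM_r(L)` is generated by the leading monomials of finitely many
elements, and orderings agreeing with `r` on finitely many comparisons give them the same leading
monomials, so `LM_{r'}(L) ≥ LM_r(L)`, hence equality, for `r' ∈ T` near `r`. Finally `TO(N)` is
compact, as a continuous image of a closed subset of the Cantor space `2^(N × N)`, so the closed
set `T` is covered by finitely many such neighbourhoods.
-/

open MvPolynomial Filter Topology

section TotalOrderings

variable {S : Type*}

def totalOrderCodes (S : Type*) : Set (S × S → Bool) :=
  {e | IsTotalOrdering fun a b => e (a, b) = true}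

theorem isClosed_totalOrderCodes : IsClosed (totalOrderCodes S) := by
  have hcoord : ∀ p : S × S, IsClopen {e : S × S → Bool | e p = true} := fun p =>
    (isClopen_discrete {true}).preimage (continuous_apply p)
  simp only [totalOrderCodes, IsTotalOrdering, Set.ofPred_and, Set.ofPred_forall]
  refine .inter (isClosed_iInter fun a => isClosed_iInter fun b => ?_)
    (.inter (isClosed_iInter fun a => isClosed_iInter fun b => isClosed_iInter fun c => ?_)
      (isClosed_iInter fun a => isClosed_iInter fun b => ?_))
  · exact isClosed_imp (hcoord _).isOpen (isClosed_imp (hcoord _).isOpen isClosed_const)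
  · exact isClosed_imp (hcoord _).isOpen (isClosed_imp (hcoord _).isOpen (hcoord _).isClosed)
  · exact (hcoord _).isClosed.union (hcoord _).isClosed

theorem TO.isOpen_setOf_rel (a b : S) : IsOpen {r : TO S | r.1 a b} :=
  TopologicalSpace.isOpen_generateFrom_of_mem ⟨a, b, rfl⟩

def TO.ofCode (e : totalOrderCodes S) : TO S :=
  ⟨fun a b => e.1 (a, b) = true, e.2⟩

theorem TO.continuous_ofCode : Continuous (TO.ofCode (S := S)) := by
  refine continuous_generateFrom_iff.mpr ?_
  rintro _ ⟨a, b, rfl⟩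
  exact ((isClopen_discrete {true}).preimage
    ((continuous_apply (a, b)).comp continuous_subtype_val)).isOpen

theorem TO.surjective_ofCode : Function.Surjective (TO.ofCode (S := S)) := by
  classical
  intro r
  refine ⟨⟨fun p => decide (r.1 p.1 p.2), by simpa [totalOrderCodes] using r.2⟩, ?_⟩
  exact Subtype.ext <| by funext a b; simp [TO.ofCode]

instance TO.compactSpace : CompactSpace (TO S) :=
  have : CompactSpace (totalOrderCodes S) :=
    isCompact_iff_compactSpace.mp isClosed_totalOrderCodes.isCompact
  TO.surjective_ofCode.compactSpace TO.continuous_ofCode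

theorem IsWO.wellFounded {r : TO S} (hr : IsWO r) : WellFounded fun a b => r.1 a b ∧ a ≠ b :=
  WellFounded.wellFounded_iff_has_min.mpr fun s hs => by
    obtain ⟨a, ha, hmin⟩ := hr s hs
    exact ⟨a, ha, fun b hb ⟨hba, hne⟩ => hne (r.2.1 _ _ hba (hmin b hb))⟩

end TotalOrderings

namespace IsLM

variable {K : Type*} [Field K] {t : ℕ} {LM : TO (Mon t) → MvPolynomial (Fin t) K → Mon t}

theorem LM_monomial (hLM : IsLM K t LM) (r : TO (Mon t)) (m : Mon t) :
    LM r (monomial m (1 : K)) = m := by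
  classical
  simpa [support_monomial] using (hLM r _ (monomial_eq_zero.not.mpr one_ne_zero)).1

theorem LM_eq_of_forall_le (hLM : IsLM K t LM) {r r' : TO (Mon t)} {p : MvPolynomial (Fin t) K}
    (hp : p ≠ 0) (h : ∀ m ∈ p.support, r'.1 m (LM r p)) : LM r' p = LM r p :=
  r'.2.1 _ _ (h _ (hLM r' p hp).1) ((hLM r' p hp).2 _ (hLM r p hp).1)

theorem support_sub_smul_lt (hLM : IsLM K t LM) (r : TO (Mon t)) {p q : MvPolynomial (Fin t) K}
    (hp : p ≠ 0) (hq : q ≠ 0) (hpq : LM r q = LM r p) :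
    ∀ m ∈ (p - (coeff (LM r p) p / coeff (LM r p) q) • q).support,
      r.1 m (LM r p) ∧ m ≠ LM r p := by
  classical
  have hq0 : coeff (LM r p) q ≠ 0 := hpq ▸ mem_support_iff.mp (hLM r q hq).1
  intro m hm
  refine ⟨?_, ?_⟩
  · rcases Finset.mem_union.mp (support_sub _ _ _ hm) with h | h
    · exact (hLM r p hp).2 m h
    · exact hpq ▸ (hLM r q hq).2 m (support_smul h)
  · rintro rfl
    exact mem_support_iff.mp hm (by simp [hq0])

end IsLM

section LeadingMonomials

variable {K A : Type*} [Field K] [Ring A] [Algebra K A] {t : ℕ}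
  (Φ : A ≃ₗ[K] MvPolynomial (Fin t) K) (LM : TO (Mon t) → MvPolynomial (Fin t) K → Mon t)

def leadingMonomials (r : TO (Mon t)) (H : Set A) : Set (Mon t) :=
  (fun h => LM r (Φ h)) '' (H \ {0})

variable {Φ LM}

theorem LMAideal_eq_span_image (r : TO (Mon t)) (H : Set A) :
    LMAideal K A t Φ LM r H =
      Ideal.span ((fun h => monomial (LM r (Φ h)) (1 : K)) '' (H \ {0})) := by
  unfold LMAideal
  congr 1
  ext q
  simp [eq_comm, and_assoc]

theorem LMAideal_eq_span_leadingMonomials (r : TO (Mon t)) (H : Set A) :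
    LMAideal K A t Φ LM r H =
      Ideal.span ((monomial · (1 : K)) '' leadingMonomials Φ LM r H) := by
  rw [LMAideal_eq_span_image, leadingMonomials, Set.image_image]

theorem monomial_mem_LMAideal_iff {r : TO (Mon t)} {H : Set A} {m : Mon t} :
    monomial m (1 : K) ∈ LMAideal K A t Φ LM r H ↔ ∃ s ∈ leadingMonomials Φ LM r H, s ≤ m := by
  classical
  simp [LMAideal_eq_span_leadingMonomials, mem_ideal_span_monomial_image, support_monomial]

theorem exists_finset_LMAideal_eq_span (r : TO (Mon t)) (H : Set A) :
    ∃ G : Finset A, ↑G ⊆ H \ {0} ∧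
      LMAideal K A t Φ LM r H = Ideal.span ((fun g => monomial (LM r (Φ g)) (1 : K)) '' G) := by
  classical
  rw [LMAideal_eq_span_image]
  obtain ⟨F, hF, hspan⟩ := (Submodule.fg_span_iff_fg_span_finset_subset _).mp
    (IsNoetherian.noetherian (Ideal.span ((fun h => monomial (LM r (Φ h)) (1 : K)) '' (H \ {0}))))
  obtain ⟨G, hGH, rfl⟩ := Finset.subset_set_image_iff.mp hF
  exact ⟨G, hGH, by rwa [Finset.coe_image] at hspan⟩

theorem exists_sub_mem_support_notMem_leadingMonomials (hLM : IsLM K t LM) {r : TO (Mon t)}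
    (hwo : IsWO r) (V : Submodule K A) (a : A) :
    ∃ v ∈ V, ∀ m ∈ (Φ (a - v)).support, m ∉ leadingMonomials Φ LM r V := by
  classical
  -- Induction on the leading monomial `m` of `a`: cancel it against an element of `V` if `m` is
  -- a leading monomial of `V`, and move the leading term into the remainder otherwise.
  induction a using (InvImage.wf (fun a => LM r (Φ a)) hwo.wellFounded).induction with
  | _ a ih =>
  by_cases ha : a = 0
  · exact ⟨0, V.zero_mem, by simp [ha]⟩
  set m := LM r (Φ a)
  obtain ⟨d, hd0, hdm, hd⟩ : ∃ d : A, d ≠ 0 ∧ LM r (Φ d) = m ∧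
      (d ∈ V ∨ (Φ d).support ⊆ {m} ∧ m ∉ leadingMonomials Φ LM r V) := by
    by_cases hm : m ∈ leadingMonomials Φ LM r V
    · obtain ⟨d, ⟨hdV, hd0⟩, hdm⟩ := hm
      exact ⟨d, hd0, hdm, .inl hdV⟩
    · exact ⟨Φ.symm (monomial m 1), by simp [monomial_eq_zero], by simp [hLM.LM_monomial],
        .inr ⟨by simp [support_monomial], hm⟩⟩
  set k := coeff m (Φ a) / coeff m (Φ d)
  have hlt := hLM.support_sub_smul_lt r (Φ.map_ne_zero_iff.mpr ha) (Φ.map_ne_zero_iff.mpr hd0) hdm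
  obtain ⟨v, hvV, hv⟩ : ∃ v ∈ V,
      ∀ m' ∈ (Φ (a - k • d - v)).support, m' ∉ leadingMonomials Φ LM r V := by
    by_cases ha' : a - k • d = 0
    · exact ⟨0, V.zero_mem, by simp [ha']⟩
    · refine ih _ (hlt _ ?_)
      simpa [map_sub, map_smul] using (hLM r _ (Φ.map_ne_zero_iff.mpr ha')).1
  rcases hd with hdV | ⟨hdsupp, hm⟩
  · exact ⟨k • d + v, V.add_mem (V.smul_mem k hdV) hvV, by rwa [sub_add_eq_sub_sub]⟩
  · refine ⟨v, hvV, fun m' hm' => ?_⟩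
    rw [show a - v = a - k • d - v + k • d by abel, map_add] at hm'
    rcases Finset.mem_union.mp (support_add hm') with h | h
    · exact hv m' h
    · rw [map_smul] at h
      rwa [Finset.mem_singleton.mp (hdsupp (support_smul h))]

theorem leadingMonomials_eq_of_subset (hLM : IsLM K t LM) {r r' : TO (Mon t)} (hwo : IsWO r)
    (V : Submodule K A) (h : leadingMonomials Φ LM r' V ⊆ leadingMonomials Φ LM r V) :
    leadingMonomials Φ LM r' V = leadingMonomials Φ LM r V := by
  classical
  refine h.antisymm fun m hm => ?_
  obtain ⟨v, hvV, hv⟩ :=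
    exists_sub_mem_support_notMem_leadingMonomials hLM hwo V (Φ.symm (monomial m 1))
  by_cases hv0 : v = 0
  · exact absurd hm (hv m (by simp [hv0, support_monomial]))
  have hmem : LM r' (Φ v) ∈ leadingMonomials Φ LM r' V := ⟨v, ⟨hvV, hv0⟩, rfl⟩
  suffices LM r' (Φ v) = m by rwa [this] at hmem
  by_contra hne
  refine hv _ ?_ (h hmem)
  rw [map_sub, LinearEquiv.apply_symm_apply, mem_support_iff, coeff_sub, coeff_monomial,
    if_neg (Ne.symm hne), zero_sub, neg_ne_zero]
  exact mem_support_iff.mp (hLM r' _ (Φ.map_ne_zero_iff.mpr hv0)).1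

theorem isUpperSet_leadingMonomials (hLM : IsLM K t LM) {T : Set (TO (Mon t))}
    (hmult : MultOn K A t Φ LM T) {r : TO (Mon t)} (hr : r ∈ T) (L : Submodule A A) :
    IsUpperSet (leadingMonomials Φ LM r L) := by
  rintro _ m hle ⟨g, ⟨hgL, hg0⟩, rfl⟩
  obtain ⟨ν, rfl⟩ := le_iff_exists_add.mp hle
  have hn : Φ.symm (monomial ν 1) ≠ 0 := by simp [monomial_eq_zero]
  refine ⟨Φ.symm (monomial ν 1) * g, ⟨L.smul_mem _ hgL, hmult.1 _ _ hn hg0⟩, ?_⟩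
  dsimp only
  rw [hmult.2 r hr _ _ hn hg0, LinearEquiv.apply_symm_apply, hLM.LM_monomial, add_comm]

theorem LMAideal_eq_of_le (hLM : IsLM K t LM) {T : Set (TO (Mon t))}
    (hmult : MultOn K A t Φ LM T) {r r' : TO (Mon t)} (hr : r ∈ T) (hwo : IsWO r)
    (L : Submodule A A) (hle : LMAideal K A t Φ LM r' L ≤ LMAideal K A t Φ LM r L) :
    LMAideal K A t Φ LM r' L = LMAideal K A t Φ LM r L := by
  have hsub : leadingMonomials Φ LM r' L ⊆ leadingMonomials Φ LM r L := fun s hs => by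
    obtain ⟨s', hs', hs's⟩ :=
      monomial_mem_LMAideal_iff.mp (hle (monomial_mem_LMAideal_iff.mpr ⟨s, hs, le_rfl⟩))
    exact isUpperSet_leadingMonomials hLM hmult hr L hs's hs'
  rw [LMAideal_eq_span_leadingMonomials, LMAideal_eq_span_leadingMonomials]
  exact congrArg (fun S => Ideal.span ((monomial · (1 : K)) '' S))
    (leadingMonomials_eq_of_subset hLM hwo (L.restrictScalars K) hsub)

theorem eventually_LMAideal_eq (hLM : IsLM K t LM) {T : Set (TO (Mon t))}
    (hTWO : ∀ r ∈ T, IsWO r) (hmult : MultOn K A t Φ LM T) (L : Submodule A A)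
    (r : TO (Mon t)) :
    ∀ᶠ r' in 𝓝 r, r' ∈ T → LMAideal K A t Φ LM r' L = LMAideal K A t Φ LM r L := by
  obtain ⟨G, hGL, hG⟩ := exists_finset_LMAideal_eq_span (Φ := Φ) (LM := LM) r (L : Set A)
  have hΦG : ∀ g ∈ G, Φ g ≠ 0 := fun g hg => Φ.map_ne_zero_iff.mpr (hGL hg).2
  have hnear : ∀ᶠ r' in 𝓝 r, ∀ g ∈ G, ∀ m ∈ (Φ g).support, r'.1 m (LM r (Φ g)) := by
    simp only [eventually_all_finset]
    exact fun g hg m hm =>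
      (TO.isOpen_setOf_rel m _).mem_nhds ((hLM r _ (hΦG g hg)).2 m hm)
  filter_upwards [hnear] with r' hr' hr'T
  refine (LMAideal_eq_of_le hLM hmult hr'T (hTWO r' hr'T) L ?_).symm
  rw [hG, Ideal.span_le]
  rintro _ ⟨g, hg, rfl⟩
  dsimp only
  rw [← hLM.LM_eq_of_forall_le (hΦG g hg) (hr' g hg)]
  exact Ideal.subset_span ⟨g, (hGL hg).1, (hGL hg).2, rfl⟩

end LeadingMonomials

theorem LMAideals_minimal_and_finite_general (K A : Type*) [Field K] [Ring A] [Algebra K A]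
    (t : ℕ)
    (Φ : A ≃ₗ[K] MvPolynomial (Fin t) K)
    (LM : TO (Mon t) → MvPolynomial (Fin t) K → Mon t) (hLM : IsLM K t LM)
    (T : Set (TO (Mon t))) (hTWO : ∀ r ∈ T, IsWO r) (hTclosed : IsClosed T)
    (hmult : MultOn K A t Φ LM T)
    (L : Submodule A A) :
    (∀ r ∈ T, ∀ r' ∈ T,
      LMAideal K A t Φ LM r' (L : Set A) ≤ LMAideal K A t Φ LM r (L : Set A) →
      LMAideal K A t Φ LM r' (L : Set A) = LMAideal K A t Φ LM r (L : Set A)) ∧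
    {I : Ideal (MvPolynomial (Fin t) K) | ∃ r ∈ T, I = LMAideal K A t Φ LM r (L : Set A)}.Finite := by
  refine ⟨fun r hr r' _ hle => LMAideal_eq_of_le hLM hmult hr (hTWO r hr) L hle, ?_⟩
  have : CompactSpace T := isCompact_iff_compactSpace.mp hTclosed.isCompact
  have hloc : IsLocallyConstant fun r : T => LMAideal K A t Φ LM r (L : Set A) :=
    (IsLocallyConstant.iff_eventually_eq _).mpr fun r =>
      (continuous_subtype_val.continuousAt.eventually
        (eventually_LMAideal_eq hLM hTWO hmult L r)).mono fun r' h => h r'.2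
  refine hloc.range_finite.subset ?_
  rintro _ ⟨r, hr, rfl⟩
  exact ⟨⟨r, hr⟩, rfl⟩

/-- Let `𝔗` be a set of total well-orderings on `N` that is closed in `TO(N)`, assume `A` is
multiplicative on `𝔗`, and let `L` be a left ideal of `A`. Then every leading monomial ideal of
`L` from `𝔗` is minimal among them with respect to inclusion, and `L` admits at most finitely
many distinct leading monomial ideals from `𝔗`. -/
theorem LMAideals_minimal_and_finite (K A : Type*) [Field K] [Ring A] [Algebra K A]
    (t : ℕ) (ht : 1 ≤ t)
    (Φ : A ≃ₗ[K] MvPolynomial (Fin t) K)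
    (LM : TO (Mon t) → MvPolynomial (Fin t) K → Mon t) (hLM : IsLM K t LM)
    (T : Set (TO (Mon t))) (hTWO : ∀ r ∈ T, IsWO r) (hTclosed : IsClosed T)
    (hmult : MultOn K A t Φ LM T)
    (L : Submodule A A) :
    (∀ r ∈ T, ∀ r' ∈ T,
      LMAideal K A t Φ LM r' (L : Set A) ≤ LMAideal K A t Φ LM r (L : Set A) →
      LMAideal K A t Φ LM r' (L : Set A) = LMAideal K A t Φ LM r (L : Set A)) ∧
    {I : Ideal (MvPolynomial (Fin t) K) | ∃ r ∈ T, I = LMAideal K A t Φ LM r (L : Set A)}.Finite :=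
  LMAideals_minimal_and_finite_general K A t Φ LM hLM T hTWO hTclosed hmult L
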